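/- Let c ∈ (0,1), let C₁.₅ > 0, and let C₃.₂ be a sufficiently large universal constant. Let k ≥ 2 and 1 ≤ d ≤ C₁.₅ ln k be integers, Δ̄ ∈ (0,1), Δ = C₃.₂·Δ̄, and let y_1,…,y_{k₀} ∈ ℝ^d (k₀ ≤ k) satisfy ‖y_r − y_s‖₂ ≥ Δ√d for r ≠ s, with weights satisfying c/k ≤ w_r ≤ 1/(ck). Set ν = Σ_r w_r δ_{y_r} and ν_j = w_j δ_{y_j}. Then for every j ∈ [k₀] and every x with ‖x − y_j‖₂ ≤ (1.6/100)·Δ̄·d/√(C₁.₅ ln k), one has 0 ≤ log (γ_{Δ̄} ⋆ ν)(x) − log (γ_{Δ̄} ⋆ ν_j)(x) ≤ 10³¹·e^{1.21/20000}/(C₃.₂³⁰·c²·d^{15}). In particular, on such a neighborhood of y_j the function γ_{Δ̄} ⋆ ν is approximately log-concave, being uniformly close in log-scale to the log-concave function γ_{Δ̄} ⋆ ν_j. -/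

import Mathlib

/-!
Near `y_j` the mixture is dominated by its `j`-th term:
`log (∑ aᵣ) - log aⱼ ≤ ∑_{r ≠ j} aᵣ / aⱼ`, and as the weights agree up to a factor `c⁻²` this is
at most `c⁻² e^{‖x - y_j‖²/2Δ̄²} ∑_{r ≠ j} e^{-‖x - y_r‖²/2Δ̄²}`. The centres are
`δ = C₃.₂ Δ̄ √d`-separated, so the balls of radius `δ/2` around them are disjoint, and on the ball
around `y_r` the term `e^{-‖x - y_r‖²/2Δ̄²}` is at most `e^{-δ²/16Δ̄²}` times the wider Gaussian
`e^{-‖z - x‖²/16Δ̄²}`. Integrating, the sum is at most `e^{-δ²/16Δ̄²}` times the ratio of the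
Gaussian integral `(4√π Δ̄)^d` to the volume of a ball of radius `δ/2`, and `Γ(d/2 + 1) ≤ √d^d`
makes this ratio at most one. What remains is the numerical bound
`e^{-C₃.₂² d/20} ≤ 10³¹/(C₃.₂³⁰ d¹⁵)`.
-/

open MeasureTheory Real

/-- The density of the centered spherical Gaussian on `ℝ^d` whose one-dimensional marginals
have variance `σ²`: `γ_σ(z) = (2πσ²)^(-d/2) exp(-‖z‖²/(2σ²))`. -/
noncomputable def gaussDensity (d : ℕ) (σ : ℝ) (z : EuclideanSpace ℝ (Fin d)) : ℝ :=
  (2 * π * σ ^ 2) ^ (-(d : ℝ) / 2) * Real.exp (-‖z‖ ^ 2 / (2 * σ ^ 2))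

open Metric Finset Module

theorem Real.Gamma_half_nat_add_one_le_sqrt_pow : ∀ n : ℕ, Gamma (n / 2 + 1) ≤ √n ^ n
  | 0 => by simp
  | 1 => by
    have hΓ : Gamma ((1 : ℕ) / 2 + 1) = √π / 2 := by
      rw [Nat.cast_one, Gamma_add_one (by norm_num), Gamma_one_half_eq]; ring
    have hπ : √π ≤ 2 := sqrt_le_iff.2 ⟨zero_le_two, by linarith [pi_le_four]⟩
    rw [hΓ, Nat.cast_one, sqrt_one, one_pow]; linarith
  | n + 2 => by
    have hn : ((n + 2 : ℕ) : ℝ) / 2 + 1 = (n / 2 + 1) + 1 := by push_cast; ring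
    have hsqrt : √((n + 2 : ℕ) : ℝ) ^ (n + 2) = (n + 2) * √((n + 2 : ℕ) : ℝ) ^ n := by
      rw [pow_add, sq_sqrt (Nat.cast_nonneg _)]; push_cast; ring
    rw [hn, Gamma_add_one (by positivity), hsqrt]
    gcongr ?_ * ?_
    · linarith
    · exact (Gamma_half_nat_add_one_le_sqrt_pow n).trans
        (pow_le_pow_left₀ (sqrt_nonneg _) (sqrt_le_sqrt (by push_cast; linarith)) n)

theorem sum_mul_measureReal_le_integral {α ι : Type*} [MeasurableSpace α] {μ : Measure α}
    {f : α → ℝ} {s : Finset ι} {A : ι → Set α} {a : ι → ℝ} (hf : Integrable f μ)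
    (hf₀ : 0 ≤ᵐ[μ] f) (hA : ∀ i ∈ s, MeasurableSet (A i)) (hAfin : ∀ i ∈ s, μ (A i) ≠ ⊤)
    (hdisj : (s : Set ι).PairwiseDisjoint A) (ha : ∀ i ∈ s, ∀ x ∈ A i, a i ≤ f x) :
    ∑ i ∈ s, a i * μ.real (A i) ≤ ∫ x, f x ∂μ :=
  calc ∑ i ∈ s, a i * μ.real (A i)
      = ∑ i ∈ s, ∫ _ in A i, a i ∂μ := by simp [mul_comm]
    _ ≤ ∑ i ∈ s, ∫ x in A i, f x ∂μ := sum_le_sum fun i hi =>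
        setIntegral_mono_on (integrableOn_const (hAfin i hi)) hf.integrableOn (hA i hi) (ha i hi)
    _ = ∫ x in ⋃ i ∈ s, A i, f x ∂μ :=
        (integral_biUnion_finset s hA hdisj fun _ _ => hf.integrableOn).symm
    _ ≤ ∫ x, f x ∂μ := setIntegral_le_integral hf hf₀

section InnerProductSpace

variable {E : Type*} [NormedAddCommGroup E] [InnerProductSpace ℝ E] [FiniteDimensional ℝ E]
  [MeasurableSpace E] [BorelSpace E]

theorem InnerProductSpace.pow_le_volume_real_ball [Nontrivial E] (x : E) {r : ℝ} (hr : 0 ≤ r) :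
    (√π * r / √(finrank ℝ E)) ^ finrank ℝ E ≤ volume.real (ball x r) := by
  set d := finrank ℝ E
  have hd : 0 < √(d : ℝ) := sqrt_pos.2 (Nat.cast_pos.2 finrank_pos)
  have hΓ : 0 < Gamma (d / 2 + 1) := Gamma_pos_of_pos (by positivity)
  rw [measureReal_def, InnerProductSpace.volume_ball, ENNReal.toReal_mul, ENNReal.toReal_pow,
    ENNReal.toReal_ofReal hr, ENNReal.toReal_ofReal (by positivity), div_pow, mul_pow,
    ← mul_div_assoc, mul_comm (r ^ d)]
  exact div_le_div_of_nonneg_left (by positivity) hΓ (Gamma_half_nat_add_one_le_sqrt_pow d)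

theorem integrable_exp_neg_mul_sq_norm_sub (x : E) {b : ℝ} (hb : 0 < b) :
    Integrable fun z => exp (-b * ‖z - x‖ ^ 2) := by
  have h := (GaussianFourier.integrable_cexp_neg_mul_sq_norm_add (V := E)
    (show 0 < (b : ℂ).re from hb) 0 0).norm
  simp only [inner_zero_left, Complex.ofReal_zero, mul_zero, add_zero, Complex.norm_exp] at h
  have h₀ : Integrable fun z : E => exp (-b * ‖z‖ ^ 2) :=
    h.congr (Filter.Eventually.of_forall fun z => by norm_cast)
  exact h₀.comp_sub_right x

theorem integral_exp_neg_mul_sq_norm_sub (x : E) {b : ℝ} (hb : 0 < b) :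
    ∫ z, exp (-b * ‖z - x‖ ^ 2) = (√(π / b)) ^ finrank ℝ E := by
  rw [integral_sub_right_eq_self (fun z => exp (-b * ‖z‖ ^ 2)) x,
    GaussianFourier.integral_rexp_neg_mul_sq_norm hb, rpow_div_two_eq_sqrt _ (by positivity),
    rpow_natCast]

theorem sum_exp_neg_sq_dist_le_of_separated [Nontrivial E] {ι : Type*} {s : Finset ι}
    {y : ι → E} {x : E} {σ δ : ℝ} (hσ : 0 < σ) (hδ : 8 * σ * √(finrank ℝ E) ≤ δ)
    (hsep : (s : Set ι).Pairwise fun r r' => δ ≤ dist (y r) (y r'))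
    (hfar : ∀ r ∈ s, δ / 2 ≤ dist x (y r)) :
    ∑ r ∈ s, exp (-dist x (y r) ^ 2 / (2 * σ ^ 2)) ≤ exp (-δ ^ 2 / (16 * σ ^ 2)) := by
  set d := finrank ℝ E
  set b : ℝ := (16 * σ ^ 2)⁻¹ with hb_def
  have hb : 0 < b := by positivity
  have hδ₀ : 0 ≤ δ := le_trans (by positivity) hδ
  set V := volume.real (ball (0 : E) (δ / 2))
  have hV : (√(π / b)) ^ d ≤ V := by
    refine le_trans ?_ (InnerProductSpace.pow_le_volume_real_ball 0 (by positivity))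
    have hsqrt : √(π / b) = √π * (4 * σ) := by
      have : π / b = (√π * (4 * σ)) ^ 2 := by
        rw [mul_pow, sq_sqrt pi_pos.le, div_inv_eq_mul]; ring
      rw [this, sqrt_sq (by positivity)]
    have hd : 0 < √(d : ℝ) := sqrt_pos.2 (Nat.cast_pos.2 finrank_pos)
    rw [hsqrt, mul_div_assoc]
    gcongr
    rw [le_div_iff₀ hd]; linarith
  have hV₀ : 0 < V := lt_of_lt_of_le (by positivity) hV
  have hpt : ∀ r ∈ s, ∀ z ∈ ball (y r) (δ / 2),
      exp (-dist x (y r) ^ 2 / (2 * σ ^ 2) + δ ^ 2 / (16 * σ ^ 2)) ≤ exp (-b * ‖z - x‖ ^ 2) := by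
    intro r hr z hz
    have hzx : ‖z - x‖ ≤ 2 * dist x (y r) := by
      rw [← dist_eq_norm, dist_comm]
      linarith [dist_triangle_right x z (y r), mem_ball.1 hz, hfar r hr]
    have key : ‖z - x‖ ^ 2 + δ ^ 2 ≤ 8 * dist x (y r) ^ 2 := by
      nlinarith [norm_nonneg (z - x), hfar r hr]
    rw [exp_le_exp]
    calc -dist x (y r) ^ 2 / (2 * σ ^ 2) + δ ^ 2 / (16 * σ ^ 2)
        = -(8 * dist x (y r) ^ 2 - δ ^ 2) / (16 * σ ^ 2) := by field_simp; ring
      _ ≤ -‖z - x‖ ^ 2 / (16 * σ ^ 2) := by gcongr; linarith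
      _ = -b * ‖z - x‖ ^ 2 := by rw [hb_def]; ring
  have hpack := sum_mul_measureReal_le_integral (μ := volume) (s := s)
    (A := fun r => ball (y r) (δ / 2))
    (integrable_exp_neg_mul_sq_norm_sub x hb) (Filter.Eventually.of_forall fun _ => (exp_pos _).le)
    (fun _ _ => measurableSet_ball) (fun _ _ => measure_ball_lt_top.ne)
    (fun r hr r' hr' hne => ball_disjoint_ball (by linarith [hsep hr hr' hne])) hpt
  simp only [Measure.addHaar_real_ball_center, ← sum_mul, exp_add] at hpack
  rw [integral_exp_neg_mul_sq_norm_sub x hb] at hpack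
  have := (mul_le_mul_iff_left₀ hV₀).1 (hpack.trans (by rwa [one_mul]))
  rwa [neg_div, exp_neg, ← one_div, le_div_iff₀ (exp_pos _)]

end InnerProductSpace

theorem gaussDensity_pos {d : ℕ} {σ : ℝ} (hσ : σ ≠ 0) (z : EuclideanSpace ℝ (Fin d)) :
    0 < gaussDensity d σ z := by
  unfold gaussDensity; positivity

theorem gaussDensity_div_gaussDensity {d : ℕ} {σ : ℝ} (hσ : σ ≠ 0)
    (u v : EuclideanSpace ℝ (Fin d)) :
    gaussDensity d σ u / gaussDensity d σ v = exp ((‖v‖ ^ 2 - ‖u‖ ^ 2) / (2 * σ ^ 2)) := by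
  have hN : (0 : ℝ) < (2 * π * σ ^ 2) ^ (-(d : ℝ) / 2) := by positivity
  rw [gaussDensity, gaussDensity, mul_div_mul_left _ _ hN.ne', ← exp_sub]
  ring_nf

theorem log_sum_sub_log_le {ι : Type*} [DecidableEq ι] {s : Finset ι} {a : ι → ℝ} {j : ι}
    (hj : j ∈ s) (ha : ∀ i ∈ s, 0 ≤ a i) (haj : 0 < a j) :
    log (∑ i ∈ s, a i) - log (a j) ≤ (∑ i ∈ s.erase j, a i) / a j := by
  have htail : 0 ≤ (∑ i ∈ s.erase j, a i) / a j :=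
    div_nonneg (sum_nonneg fun i hi => ha i (mem_of_mem_erase hi)) haj.le
  have hsum : ∑ i ∈ s, a i = a j * (1 + (∑ i ∈ s.erase j, a i) / a j) := by
    rw [← add_sum_erase s a hj]; field_simp
  rw [hsum, log_mul haj.ne' (by positivity), add_sub_cancel_left]
  linarith [log_le_sub_one_of_pos (show 0 < 1 + (∑ i ∈ s.erase j, a i) / a j by positivity)]

theorem log_sum_gaussDensity_sub_log_le {ι : Type*} [Fintype ι] {d : ℕ} [NeZero d]
    {σ δ K : ℝ} (hσ : 0 < σ) (hδ : 8 * σ * √d ≤ δ) {y : ι → EuclideanSpace ℝ (Fin d)}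
    (hsep : ∀ r r', r ≠ r' → δ ≤ dist (y r) (y r')) {w : ι → ℝ} (hw : ∀ r, 0 < w r) {j : ι}
    (hwj : ∀ r, w r ≤ K * w j) {x : EuclideanSpace ℝ (Fin d)} (hx : dist x (y j) ≤ δ / 100) :
    log (∑ r, w r * gaussDensity d σ (x - y r)) - log (w j * gaussDensity d σ (x - y j)) ≤
      K * exp (-δ ^ 2 / (20 * σ ^ 2)) := by
  classical
  set a : ι → ℝ := fun r => w r * gaussDensity d σ (x - y r)
  have ha : ∀ r, 0 < a r := fun r => mul_pos (hw r) (gaussDensity_pos hσ.ne' _)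
  have hK : 0 ≤ K := nonneg_of_mul_nonneg_left ((hw j).trans_le (hwj j)).le (hw j)
  have hratio : ∀ r, a r / a j ≤
      K * exp (dist x (y j) ^ 2 / (2 * σ ^ 2)) * exp (-dist x (y r) ^ 2 / (2 * σ ^ 2)) := by
    intro r
    rw [mul_div_mul_comm, gaussDensity_div_gaussDensity hσ.ne', ← dist_eq_norm,
      ← dist_eq_norm, mul_assoc, ← exp_add, sub_div, sub_eq_add_neg, neg_div]
    gcongr
    exact (div_le_iff₀ (hw j)).2 (hwj r)
  have hδ₀ : 0 ≤ δ := le_trans (by positivity) hδ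
  have hfar : ∀ r ∈ univ.erase j, δ / 2 ≤ dist x (y r) := by
    intro r hr
    linarith [hsep j r (ne_of_mem_erase hr).symm, dist_triangle_left (y j) (y r) x]
  have hpack := sum_exp_neg_sq_dist_le_of_separated hσ
    (by rwa [finrank_euclideanSpace_fin]) (fun r _ r' _ hne => hsep r r' hne) hfar
  have hexp : dist x (y j) ^ 2 / (2 * σ ^ 2) + -δ ^ 2 / (16 * σ ^ 2) ≤ -δ ^ 2 / (20 * σ ^ 2) := by
    calc dist x (y j) ^ 2 / (2 * σ ^ 2) + -δ ^ 2 / (16 * σ ^ 2)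
        ≤ (δ / 100) ^ 2 / (2 * σ ^ 2) + -δ ^ 2 / (16 * σ ^ 2) := by gcongr
      _ = δ ^ 2 / σ ^ 2 * (1 / 20000 - 1 / 16) := by ring
      _ ≤ δ ^ 2 / σ ^ 2 * (-1 / 20) := by gcongr; norm_num
      _ = -δ ^ 2 / (20 * σ ^ 2) := by ring
  calc log (∑ r, a r) - log (a j)
      ≤ ∑ r ∈ univ.erase j, a r / a j := by
        rw [← sum_div]; exact log_sum_sub_log_le (mem_univ j) (fun r _ => (ha r).le) (ha j)
    _ ≤ ∑ r ∈ univ.erase j,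
          K * exp (dist x (y j) ^ 2 / (2 * σ ^ 2)) * exp (-dist x (y r) ^ 2 / (2 * σ ^ 2)) :=
        sum_le_sum fun r _ => hratio r
    _ ≤ K * exp (dist x (y j) ^ 2 / (2 * σ ^ 2)) * exp (-δ ^ 2 / (16 * σ ^ 2)) := by
        rw [← mul_sum]; gcongr
    _ ≤ K * exp (-δ ^ 2 / (20 * σ ^ 2)) := by
        rw [mul_assoc, ← exp_add]; gcongr

theorem div_sqrt_le_sqrt_of_le {a b : ℝ} (ha : 0 < a) (hab : a ≤ b) : a / √b ≤ √a := by
  simpa only [div_sqrt] using div_le_div_of_nonneg_left ha.le (sqrt_pos.2 ha) (sqrt_le_sqrt hab)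

open Nat in
theorem exp_neg_sq_mul_div_twenty_le {C d : ℝ} (hC : 100 ≤ C) (hd : 1 ≤ d) :
    exp (-(C ^ 2 * d / 20)) ≤ 10 ^ 31 / (C ^ 30 * d ^ 15) := by
  have hu : 10 ^ 60 ≤ C ^ 30 * d ^ 15 := calc
    (10 : ℝ) ^ 60 = 100 ^ 30 * 1 ^ 15 := by norm_num
    _ ≤ C ^ 30 * d ^ 15 := by gcongr
  have hexp : (C ^ 30 * d ^ 15) ^ 2 / (20 ^ 30 * 30 !) ≤ exp (C ^ 2 * d / 20) := by
    convert pow_div_factorial_le_exp _ (by positivity : 0 ≤ C ^ 2 * d / 20) 30 using 1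
    ring
  have hfact : (20 : ℝ) ^ 30 * 30 ! ≤ 10 ^ 31 * 10 ^ 60 := by norm_num [Nat.factorial]
  rw [exp_neg, inv_le_comm₀ (exp_pos _) (by positivity), inv_div]
  refine le_trans ?_ hexp
  rw [div_le_div_iff₀ (by norm_num) (by positivity)]
  nlinarith

/-- For `c ∈ (0,1)`, `C₁.₅ > 0` and a sufficiently large universal constant
`C₃.₂`, with `Δ = C₃.₂·Δ̄`, well-separated centers and weights in `[c/k, 1/(ck)]`: near each
center `y_j` (within `(1.6/100)·Δ̄·d/√(C₁.₅ ln k)`),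
`0 ≤ log (γ_{Δ̄} ⋆ ν)(x) − log (γ_{Δ̄} ⋆ ν_j)(x) ≤ 10³¹·e^(1.21/20000)/(C₃.₂³⁰·c²·d¹⁵)`,
so `γ_{Δ̄} ⋆ ν` is approximately log-concave near `y_j`. -/
theorem mixture_approx_log_concave_near_center :
    ∃ C₃₂₀ : ℝ, ∀ C₃₂ : ℝ, C₃₂₀ ≤ C₃₂ →
      ∀ (c : ℝ), 0 < c → c < 1 →
        ∀ (C₁₅ : ℝ), 0 < C₁₅ →
          ∀ (k d k₀ : ℕ), 2 ≤ k → 1 ≤ d → (d : ℝ) ≤ C₁₅ * Real.log k → 1 ≤ k₀ → k₀ ≤ k →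
            ∀ (Δb : ℝ), 0 < Δb → Δb < 1 →
              ∀ (y : Fin k₀ → EuclideanSpace ℝ (Fin d)) (w : Fin k₀ → ℝ),
                (∀ r, c / k ≤ w r) → (∀ r, w r ≤ 1 / (c * k)) →
                  (∀ r r' : Fin k₀, r ≠ r' →
                      (C₃₂ * Δb) * Real.sqrt d ≤ dist (y r) (y r')) →
                    ∀ (j : Fin k₀) (x : EuclideanSpace ℝ (Fin d)),
                      dist x (y j) ≤ (1.6 / 100) * Δb * d / Real.sqrt (C₁₅ * Real.log k) →
                        0 ≤ Real.log (∑ r : Fin k₀, w r * gaussDensity d Δb (x - y r)) -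
                            Real.log (w j * gaussDensity d Δb (x - y j)) ∧
                          Real.log (∑ r : Fin k₀, w r * gaussDensity d Δb (x - y r)) -
                              Real.log (w j * gaussDensity d Δb (x - y j)) ≤
                            10 ^ 31 * Real.exp (1.21 / 20000) /
                              (C₃₂ ^ 30 * c ^ 2 * (d : ℝ) ^ 15) := by
  refine ⟨100, ?_⟩
  intro C₃₂ hC c hc _ C₁₅ _ k d k₀ hk hd hdk _ _ Δb hΔb _ y w hwlo hwhi hsep j x hx
  have : NeZero d := ⟨by omega⟩
  have hd₀ : (0 : ℝ) < d := by positivity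
  have hw : ∀ r, 0 < w r := fun r => lt_of_lt_of_le (by positivity) (hwlo r)
  have hwj : ∀ r, w r ≤ (c ^ 2)⁻¹ * w j := fun r => calc
    w r ≤ 1 / (c * k) := hwhi r
    _ = (c ^ 2)⁻¹ * (c / k) := by field_simp
    _ ≤ (c ^ 2)⁻¹ * w j := by gcongr; exact hwlo j
  have hρ : dist x (y j) ≤ C₃₂ * Δb * √d / 100 := calc
    dist x (y j) ≤ 0.016 * Δb * (d / √(C₁₅ * log k)) := by convert hx using 1; ring
    _ ≤ C₃₂ / 100 * Δb * √d := by gcongr; exacts [by linarith, div_sqrt_le_sqrt_of_le hd₀ hdk]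
    _ = C₃₂ * Δb * √d / 100 := by ring
  have hlog := log_sum_gaussDensity_sub_log_le hΔb (by gcongr; linarith) hsep hw hwj hρ
  have hterm : ∀ r, 0 < w r * gaussDensity d Δb (x - y r) :=
    fun r => mul_pos (hw r) (gaussDensity_pos hΔb.ne' _)
  refine ⟨sub_nonneg.2 (log_le_log (hterm j)
    (single_le_sum (fun r _ => (hterm r).le) (mem_univ j))), hlog.trans ?_⟩
  have hexponent : -(C₃₂ * Δb * √d) ^ 2 / (20 * Δb ^ 2) = -(C₃₂ ^ 2 * d / 20) := by
    rw [mul_pow, sq_sqrt hd₀.le]; field_simp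
  calc (c ^ 2)⁻¹ * exp (-(C₃₂ * Δb * √d) ^ 2 / (20 * Δb ^ 2))
      ≤ (c ^ 2)⁻¹ * (10 ^ 31 / (C₃₂ ^ 30 * d ^ 15)) := by
        rw [hexponent]; gcongr; exact exp_neg_sq_mul_div_twenty_le hC (by exact_mod_cast hd)
    _ = 10 ^ 31 / (C₃₂ ^ 30 * c ^ 2 * d ^ 15) := by field_simp
    _ ≤ 10 ^ 31 * exp (1.21 / 20000) / (C₃₂ ^ 30 * c ^ 2 * d ^ 15) := by
        gcongr; exact le_mul_of_one_le_right (by norm_num) (one_le_exp (by norm_num))
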